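/- Model H²(E_{S²};ℤ) by ℤ² with bilinear form ⟨(p,q),(p',q')⟩ = pq' + p'q − qq' and K = (3,2). If u₁, u₂ ∈ ℤ² satisfy u₁ + u₂ = (1,2), ⟨u₁,u₂⟩ = 0, ⟨uᵢ,uᵢ⟩ + 2 = ⟨uᵢ,K⟩ for i = 1,2, and ⟨uᵢ,K⟩ ≥ 1 for i = 1,2, then {u₁,u₂} = {(0,1),(1,1)}. -/
import Mathlib


/-- Intersection form on H²(E_{S²};ℤ) ≅ ℤ²: ⟨(p,q),(p',q')⟩ = pq' + p'q − qq'. -/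
def formE (u v : ℤ × ℤ) : ℤ := u.1 * v.2 + v.1 * u.2 - u.2 * v.2

theorem stmt_5 (u₁ u₂ : ℤ × ℤ)
    (hsum : u₁ + u₂ = (1, 2))
    (h12 : formE u₁ u₂ = 0)
    (hadj1 : formE u₁ u₁ + 2 = formE u₁ (3, 2))
    (hadj2 : formE u₂ u₂ + 2 = formE u₂ (3, 2))
    (hpos1 : formE u₁ (3, 2) ≥ 1)
    (hpos2 : formE u₂ (3, 2) ≥ 1) :
    (u₁ = (0, 1) ∧ u₂ = (1, 1)) ∨ (u₁ = (1, 1) ∧ u₂ = (0, 1)) := by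
  obtain ⟨p, q⟩ := u₁
  obtain ⟨a, b⟩ := u₂
  simp only [formE, Prod.mk_add_mk, Prod.mk.injEq] at *
  obtain ⟨ha, hb⟩ := hsum
  have haa : a = 1 - p := by omega
  have hbb : b = 2 - q := by omega
  subst haa hbb
  have hq : q = 1 := by nlinarith [h12, hadj1]
  subst hq
  have hp : p = 0 ∨ p = 1 := by omega
  rcases hp with h | h <;> subst h <;> simp
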